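/- Let P be a finite poset and φ : P → P a monotone map. Then Δ(P) NE-reduces to Δ(φ(P)); in particular Δ(P) and Δ(φ(P)) have the same simple homotopy type and Δ(φ(P)) is a deformation retract of Δ(P). -/
import Mathlib


/-- An abstract simplicial complex on a vertex type `V`: a collection of
nonempty finite subsets of `V` closed under passing to nonempty subsets. -/
structure SComplex (V : Type*) where
  faces : Set (Finset V)
  nonempty_of_mem : ∀ σ ∈ faces, σ.Nonempty
  down_closed : ∀ σ ∈ faces, ∀ τ ⊆ σ, τ.Nonempty → τ ∈ faces

namespace SComplex

variable {V W : Type*}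

/-- Deletion of a vertex: all faces not containing `v`. -/
def del (X : SComplex V) (v : V) : SComplex V where
  faces := {σ ∈ X.faces | v ∉ σ}
  nonempty_of_mem := fun σ h => X.nonempty_of_mem σ h.1
  down_closed := fun σ h τ hτ hne =>
    ⟨X.down_closed σ h.1 τ hτ hne, fun hv => h.2 (hτ hv)⟩

/-- The link of a vertex `v`: faces `σ` avoiding `v` with `σ ∪ {v}` a face. -/
def link [DecidableEq V] (X : SComplex V) (v : V) : SComplex V where
  faces := {σ | v ∉ σ ∧ σ.Nonempty ∧ insert v σ ∈ X.faces}
  nonempty_of_mem := fun _ h => h.2.1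
  down_closed := fun σ h τ hτ hne =>
    ⟨fun hv => h.1 (hτ hv), hne,
      X.down_closed _ h.2.2 _ (Finset.insert_subset_insert v hτ)
        ⟨v, Finset.mem_insert_self v _⟩⟩

/-- The one-point complex on the vertex `v`. -/
def point (v : V) : SComplex V where
  faces := {{v}}
  nonempty_of_mem := fun σ h => by
    simp only [Set.mem_singleton_iff] at h; subst h; exact Finset.singleton_nonempty v
  down_closed := fun σ h τ hτ hne => by
    simp only [Set.mem_singleton_iff] at h ⊢
    subst h
    exact Finset.Subset.antisymm hτ
      (Finset.singleton_subset_iff.2 (by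
        obtain ⟨x, hx⟩ := hne
        have := Finset.mem_singleton.1 (hτ hx)
        subst this; exact hx))

/-- Nonevasiveness, defined recursively: a point is nonevasive, and `X` is
nonevasive if some vertex `v` has both the deletion `X \ {v}` and the link
`lk_X v` nonevasive. -/
inductive Nonevasive [DecidableEq V] : SComplex V → Prop where
  | point (X : SComplex V) (v : V) (h : X.faces = {({v} : Finset V)}) : Nonevasive X
  | step (X : SComplex V) (v : V) (hv : ({v} : Finset V) ∈ X.faces)
      (hdel : Nonevasive (X.del v)) (hlink : Nonevasive (X.link v)) : Nonevasive X

/-- `NERed X Y` (`X ↘_NE Y`): `Y` is obtained from `X` by successively deleting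
vertices whose links are nonevasive. -/
inductive NERed [DecidableEq V] : SComplex V → SComplex V → Prop where
  | refl (X : SComplex V) : NERed X X
  | step (X Y : SComplex V) (v : V) (hv : ({v} : Finset V) ∈ X.faces)
      (hlink : Nonevasive (X.link v)) (h : NERed (X.del v) Y) : NERed X Y

/-- An elementary collapse: removal of a free pair `τ ⊂ σ` with
`dim σ = dim τ + 1` and `σ` the unique face properly containing `τ`. -/
def IsElemCollapse (X Y : SComplex V) : Prop :=
  ∃ σ τ : Finset V, σ ∈ X.faces ∧ τ ∈ X.faces ∧ τ ⊂ σ ∧ σ.card = τ.card + 1 ∧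
    (∀ ρ ∈ X.faces, τ ⊂ ρ → ρ = σ) ∧ Y.faces = X.faces \ {σ, τ}

/-- `Collapses X Y`: `X` collapses onto `Y` by a sequence of elementary collapses. -/
inductive Collapses : SComplex V → SComplex V → Prop where
  | refl (X : SComplex V) : Collapses X X
  | step (X Z Y : SComplex V) (h : IsElemCollapse X Z) (h' : Collapses Z Y) :
      Collapses X Y

/-- The simplicial join of two complexes. -/
def join [DecidableEq V] [DecidableEq W] (X : SComplex V) (Y : SComplex W) :
    SComplex (V ⊕ W) where
  faces := {ρ | ρ.Nonempty ∧ ∃ (σ : Finset V) (τ : Finset W),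
      (σ ∈ X.faces ∨ σ = ∅) ∧ (τ ∈ Y.faces ∨ τ = ∅) ∧
      ρ = σ.image Sum.inl ∪ τ.image Sum.inr}
  nonempty_of_mem := fun _ h => h.1
  down_closed := by
    rintro ρ ⟨-, σ, τ, hσ, hτ, rfl⟩ ρ' hsub hne
    classical
    refine ⟨hne, σ.filter (fun a => Sum.inl a ∈ ρ'), τ.filter (fun b => Sum.inr b ∈ ρ'),
      ?_, ?_, ?_⟩
    · rcases (σ.filter (fun a => Sum.inl a ∈ ρ')).eq_empty_or_nonempty with h | h
      · exact Or.inr h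
      · rcases hσ with hσ | rfl
        · exact Or.inl (X.down_closed σ hσ _ (Finset.filter_subset _ _) h)
        · simp at h
    · rcases (τ.filter (fun b => Sum.inr b ∈ ρ')).eq_empty_or_nonempty with h | h
      · exact Or.inr h
      · rcases hτ with hτ | rfl
        · exact Or.inl (Y.down_closed τ hτ _ (Finset.filter_subset _ _) h)
        · simp at h
    · ext z
      cases z with
      | inl a =>
        constructor
        · intro hz
          have := hsub hz
          simp only [Finset.mem_union, Finset.mem_image] at this ⊢
          refine Or.inl ⟨a, ?_, rfl⟩
          simp only [Finset.mem_filter]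
          rcases this with ⟨a', ha', he⟩ | ⟨b', _, he⟩
          · cases he; exact ⟨ha', hz⟩
          · cases he
        · intro hz
          simp only [Finset.mem_union, Finset.mem_image, Finset.mem_filter] at hz
          rcases hz with ⟨a', ⟨_, hmem⟩, he⟩ | ⟨b', _, he⟩
          · cases he; exact hmem
          · cases he
      | inr b =>
        constructor
        · intro hz
          have := hsub hz
          simp only [Finset.mem_union, Finset.mem_image] at this ⊢
          refine Or.inr ⟨b, ?_, rfl⟩
          simp only [Finset.mem_filter]
          rcases this with ⟨a', _, he⟩ | ⟨b', hb', he⟩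
          · cases he
          · cases he; exact ⟨hb', hz⟩
        · intro hz
          simp only [Finset.mem_union, Finset.mem_image, Finset.mem_filter] at hz
          rcases hz with ⟨a', _, he⟩ | ⟨b', ⟨_, hmem⟩, he⟩
          · cases he
          · cases he; exact hmem

end SComplex

/-- The order complex of a subset `Q` of a poset `P`: simplices are the
nonempty finite chains contained in `Q`. -/
def orderComplexOn (P : Type*) [PartialOrder P] (Q : Set P) : SComplex P where
  faces := {σ | σ.Nonempty ∧ (∀ x ∈ σ, x ∈ Q) ∧ ∀ x ∈ σ, ∀ y ∈ σ, x ≤ y ∨ y ≤ x}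
  nonempty_of_mem := fun _ h => h.1
  down_closed := fun σ h τ hτ hne =>
    ⟨hne, fun x hx => h.2.1 x (hτ hx), fun x hx y hy => h.2.2 x (hτ hx) y (hτ hy)⟩

/-- A map `φ : P → P` on a poset is a *monotone poset map* if it is
order-preserving and for every `x`, either `x ≤ φ x` or `φ x ≤ x`. -/
def IsMonotonePosetMap {P : Type*} [PartialOrder P] (φ : P → P) : Prop :=
  Monotone φ ∧ ∀ x : P, x ≤ φ x ∨ φ x ≤ x



/-! ### Auxiliary material -/

namespace SComplex

variable {V : Type*}

theorem ext' {X Y : SComplex V} (h : X.faces = Y.faces) : X = Y := by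
  cases X; cases Y; simpa using h

/-- A cone with apex `v`. -/
def IsCone [DecidableEq V] (X : SComplex V) (v : V) : Prop :=
  ({v} : Finset V) ∈ X.faces ∧ ∀ σ ∈ X.faces, insert v σ ∈ X.faces

/-- Vertices of a complex. -/
def verts (X : SComplex V) : Set V := {u | ({u} : Finset V) ∈ X.faces}

theorem nonevasive_of_isCone_aux [DecidableEq V] [Fintype V] :
    ∀ (n : ℕ) (X : SComplex V) (v : V), X.verts.ncard ≤ n → X.IsCone v →
      X.Nonevasive := by
  intro n
  induction n with
  | zero =>
    intro X v hn hc
    have hv : v ∈ X.verts := hc.1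
    have : 0 < X.verts.ncard := (Set.ncard_pos (Set.toFinite _)).2 ⟨v, hv⟩
    omega
  | succ n ih =>
    intro X v hn hc
    obtain ⟨hv, hcone⟩ := hc
    by_cases hall : ∀ u, ({u} : Finset V) ∈ X.faces → u = v
    · refine Nonevasive.point X v ?_
      ext σ
      simp only [Set.mem_singleton_iff]
      constructor
      · intro hσ
        have h1 : σ ⊆ {v} := by
          intro u hu
          have : ({u} : Finset V) ∈ X.faces :=
            X.down_closed σ hσ {u} (Finset.singleton_subset_iff.2 hu)
              ⟨u, Finset.mem_singleton_self u⟩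
          exact Finset.mem_singleton.2 (hall u this)
        have h2 := X.nonempty_of_mem σ hσ
        obtain ⟨u, hu⟩ := h2
        have huv : u = v := Finset.mem_singleton.1 (h1 hu)
        subst huv
        exact Finset.Subset.antisymm h1 (Finset.singleton_subset_iff.2 hu)
      · rintro rfl; exact hv
    · push_neg at hall
      obtain ⟨w, hw, hwv⟩ := hall
      have hvw : v ≠ w := fun e => hwv e.symm
      have hwverts : w ∈ X.verts := hw
      have hcard : ∀ Y : SComplex V, Y.verts ⊆ X.verts \ {w} → Y.verts.ncard ≤ n := by
        intro Y hsub
        have h1 : Y.verts.ncard ≤ (X.verts \ {w}).ncard :=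
          Set.ncard_le_ncard hsub (Set.toFinite _)
        have h2 : (X.verts \ {w}).ncard < X.verts.ncard :=
          Set.ncard_diff_singleton_lt_of_mem hwverts (Set.toFinite _)
        omega
      refine Nonevasive.step X w hw ?_ ?_
      · refine ih (X.del w) v (hcard _ ?_) ⟨⟨hv, ?_⟩, ?_⟩
        · rintro u ⟨hu, hu2⟩
          refine ⟨hu, ?_⟩
          simp only [Set.mem_singleton_iff]
          intro e; subst e
          exact hu2 (Finset.mem_singleton_self u)
        · simp only [Finset.mem_singleton]; exact hwv
        · rintro σ ⟨hσ, hwσ⟩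
          refine ⟨hcone σ hσ, ?_⟩
          simp only [Finset.mem_insert]
          rintro (e | hws)
          · exact hwv e
          · exact hwσ hws
      · refine ih (X.link w) v (hcard _ ?_) ⟨⟨?_, ?_, ?_⟩, ?_⟩
        · rintro u ⟨hu1, hu2, hu3⟩
          constructor
          · exact X.down_closed _ hu3 {u}
              (Finset.singleton_subset_iff.2 (Finset.mem_insert_of_mem
                (Finset.mem_singleton_self u)))
              ⟨u, Finset.mem_singleton_self u⟩
          · simp only [Set.mem_singleton_iff]
            intro e; subst e
            exact hu1 (Finset.mem_singleton_self u)
        · simp only [Finset.mem_singleton]; exact hwv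
        · exact Finset.singleton_nonempty v
        · have h1 : insert v ({w} : Finset V) ∈ X.faces := hcone {w} hw
          have h2 : insert w ({v} : Finset V) = insert v ({w} : Finset V) := by
            ext u; simp [Finset.mem_insert]; tauto
          rw [h2]; exact h1
        · rintro σ ⟨hσ1, hσ2, hσ3⟩
          refine ⟨?_, ⟨v, Finset.mem_insert_self v σ⟩, ?_⟩
          · simp only [Finset.mem_insert]
            rintro (e | hws)
            · exact hwv e
            · exact hσ1 hws
          · have h1 : insert w (insert v σ) = insert v (insert w σ) := by
              ext u; simp [Finset.mem_insert]; tauto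
            rw [h1]
            exact hcone _ hσ3

theorem nonevasive_of_isCone [DecidableEq V] [Fintype V] (X : SComplex V) (v : V)
    (hc : X.IsCone v) : X.Nonevasive :=
  nonevasive_of_isCone_aux X.verts.ncard X v le_rfl hc

theorem NERed.trans' [DecidableEq V] {X Y Z : SComplex V} (h1 : NERed X Y)
    (h2 : NERed Y Z) : NERed X Z := by
  induction h1 with
  | refl X => exact h2
  | step X Y v hv hlink h ih => exact NERed.step X Z v hv hlink (ih h2)

theorem nonevasive_of_nered [DecidableEq V] {X Y : SComplex V} (h : NERed X Y)
    (hY : Nonevasive Y) : Nonevasive X := by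
  induction h with
  | refl X => exact hY
  | step X Y v hv hlink h ih => exact Nonevasive.step X v hv (ih hY) hlink

/-- Join of two complexes on the same vertex type. -/
def join2 [DecidableEq V] (X Y : SComplex V) : SComplex V where
  faces := {ρ | ρ.Nonempty ∧ ∃ σ τ : Finset V,
      (σ ∈ X.faces ∨ σ = ∅) ∧ (τ ∈ Y.faces ∨ τ = ∅) ∧ ρ = σ ∪ τ}
  nonempty_of_mem := fun _ h => h.1
  down_closed := by
    rintro ρ ⟨-, σ, τ, hσ, hτ, rfl⟩ ρ' hsub hne
    refine ⟨hne, σ ∩ ρ', τ ∩ ρ', ?_, ?_, ?_⟩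
    · rcases (σ ∩ ρ').eq_empty_or_nonempty with h | h
      · exact Or.inr h
      · rcases hσ with hσ | rfl
        · exact Or.inl (X.down_closed σ hσ _ Finset.inter_subset_left h)
        · rw [Finset.empty_inter] at h; exact absurd rfl h.ne_empty.symm
    · rcases (τ ∩ ρ').eq_empty_or_nonempty with h | h
      · exact Or.inr h
      · rcases hτ with hτ | rfl
        · exact Or.inl (Y.down_closed τ hτ _ Finset.inter_subset_left h)
        · rw [Finset.empty_inter] at h; exact absurd rfl h.ne_empty.symm
    · ext u
      simp only [Finset.mem_union, Finset.mem_inter]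
      constructor
      · intro hu
        have := hsub hu
        rcases Finset.mem_union.1 this with h | h
        · exact Or.inl ⟨h, hu⟩
        · exact Or.inr ⟨h, hu⟩
      · rintro (⟨-, h⟩ | ⟨-, h⟩) <;> exact h

theorem join2_comm [DecidableEq V] (X Y : SComplex V) : join2 X Y = join2 Y X := by
  apply ext'
  ext ρ
  constructor
  · rintro ⟨hne, σ, τ, hσ, hτ, rfl⟩
    exact ⟨hne, τ, σ, hτ, hσ, Finset.union_comm σ τ⟩
  · rintro ⟨hne, σ, τ, hσ, hτ, rfl⟩
    exact ⟨hne, τ, σ, hτ, hσ, Finset.union_comm σ τ⟩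

theorem join2_del [DecidableEq V] (X Y : SComplex V) (v : V)
    (H : ∀ σ ∈ X.faces, v ∉ σ) :
    (join2 X Y).del v = join2 X (Y.del v) := by
  apply ext'
  ext ρ
  constructor
  · rintro ⟨⟨hne, σ, τ, hσ, hτ, rfl⟩, hvρ⟩
    refine ⟨hne, σ, τ, hσ, ?_, rfl⟩
    rcases hτ with hτ | rfl
    · exact Or.inl ⟨hτ, fun hvτ => hvρ (Finset.mem_union_right σ hvτ)⟩
    · exact Or.inr rfl
  · rintro ⟨hne, σ, τ, hσ, hτ, rfl⟩
    have hvσ : v ∉ σ := by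
      rcases hσ with hσ | rfl
      · exact H σ hσ
      · simp
    have hvτ : v ∉ τ := by
      rcases hτ with hτ | rfl
      · exact hτ.2
      · simp
    refine ⟨⟨hne, σ, τ, hσ, ?_, rfl⟩, ?_⟩
    · rcases hτ with hτ | rfl
      · exact Or.inl hτ.1
      · exact Or.inr rfl
    · simp only [Finset.mem_union]
      rintro (h | h)
      · exact hvσ h
      · exact hvτ h

theorem join2_link [DecidableEq V] (X Y : SComplex V) (v : V)
    (hv : ({v} : Finset V) ∈ Y.faces) (H : ∀ σ ∈ X.faces, v ∉ σ) :
    (join2 X Y).link v = join2 X (Y.link v) := by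
  apply ext'
  ext ρ
  constructor
  · rintro ⟨hvρ, hne, hins⟩
    obtain ⟨-, σ, τ, hσ, hτ, he⟩ := hins
    have hvσ : v ∉ σ := by
      rcases hσ with hσ | rfl
      · exact H σ hσ
      · simp
    have hvτ : v ∈ τ := by
      have : v ∈ σ ∪ τ := he ▸ Finset.mem_insert_self v ρ
      rcases Finset.mem_union.1 this with h | h
      · exact absurd h hvσ
      · exact h
    have hτY : τ ∈ Y.faces := by
      rcases hτ with hτ | rfl
      · exact hτ
      · exact absurd hvτ (Finset.notMem_empty v)
    have hρeq : ρ = σ ∪ τ.erase v := by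
      have h1 : ρ = (insert v ρ).erase v := by
        rw [Finset.erase_insert hvρ]
      rw [h1, he, Finset.erase_union_distrib, Finset.erase_eq_of_notMem hvσ]
    refine ⟨hne, σ, τ.erase v, hσ, ?_, hρeq⟩
    rcases (τ.erase v).eq_empty_or_nonempty with h | h
    · exact Or.inr h
    · refine Or.inl ⟨Finset.notMem_erase v τ, h, ?_⟩
      rw [Finset.insert_erase hvτ]
      exact hτY
  · rintro ⟨hne, σ, τ, hσ, hτ, rfl⟩
    have hvσ : v ∉ σ := by
      rcases hσ with hσ | rfl
      · exact H σ hσ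
      · simp
    have hvτ : v ∉ τ := by
      rcases hτ with hτ | rfl
      · exact hτ.1
      · simp
    refine ⟨?_, hne, ?_, σ, insert v τ, hσ, ?_, ?_⟩
    · simp only [Finset.mem_union]
      rintro (h | h)
      · exact hvσ h
      · exact hvτ h
    · exact ⟨v, by simp⟩
    · refine Or.inl ?_
      rcases hτ with hτ | rfl
      · exact hτ.2.2
      · simpa using hv
    · rw [Finset.union_insert]

theorem nonevasive_join2_right [DecidableEq V] [Fintype V] (X Y : SComplex V)
    (hY : Nonevasive Y)
    (H : ∀ σ ∈ X.faces, ∀ τ ∈ Y.faces, ∀ a ∈ σ, a ∉ τ) :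
    Nonevasive (join2 X Y) := by
  induction hY with
  | point Y v hfaces =>
    refine nonevasive_of_isCone _ v ⟨?_, ?_⟩
    · exact ⟨Finset.singleton_nonempty v, ∅, {v}, Or.inr rfl,
        Or.inl (by rw [hfaces]; rfl), by simp⟩
    · rintro ρ ⟨hne, σ, τ, hσ, hτ, rfl⟩
      refine ⟨⟨v, Finset.mem_insert_self v _⟩, σ, insert v τ, hσ, ?_, ?_⟩
      · refine Or.inl ?_
        rw [hfaces]
        rcases hτ with hτ | rfl
        · rw [hfaces] at hτ
          simp only [Set.mem_singleton_iff] at hτ ⊢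
          subst hτ; simp
        · simp
      · rw [Finset.union_insert]
  | step Y v hv hdel hlink ihdel ihlink =>
    refine Nonevasive.step _ v ?_ ?_ ?_
    · exact ⟨Finset.singleton_nonempty v, ∅, {v}, Or.inr rfl, Or.inl hv, by simp⟩
    · have hH : ∀ σ ∈ X.faces, v ∉ σ := fun σ hσ hvσ =>
        H σ hσ {v} hv v hvσ (Finset.mem_singleton_self v)
      rw [join2_del X Y v hH]
      exact ihdel (fun σ hσ τ hτ a ha => H σ hσ τ hτ.1 a ha)
    · have hH : ∀ σ ∈ X.faces, v ∉ σ := fun σ hσ hvσ =>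
        H σ hσ {v} hv v hvσ (Finset.mem_singleton_self v)
      rw [join2_link X Y v hv hH]
      exact ihlink (fun σ hσ τ hτ a ha haτ =>
        H σ hσ (insert v τ) hτ.2.2 a ha (Finset.mem_insert_of_mem haτ))

end SComplex

section PosetPart

variable {P : Type*} [Fintype P] [DecidableEq P] [PartialOrder P]

/-- Order complex of a finset. -/
def oc (S : Finset P) : SComplex P := orderComplexOn P ↑S

lemma oc_faces {S : Finset P} {σ : Finset P} :
    σ ∈ (oc S).faces ↔ σ.Nonempty ∧ (∀ y ∈ σ, y ∈ S) ∧
      ∀ a ∈ σ, ∀ b ∈ σ, a ≤ b ∨ b ≤ a := Iff.rfl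

lemma oc_del (S : Finset P) (x : P) : (oc S).del x = oc (S.erase x) := by
  apply SComplex.ext'
  ext σ
  constructor
  · rintro ⟨⟨hne, hmem, hch⟩, hx⟩
    exact ⟨hne, fun y hy => Finset.mem_erase.2 ⟨fun e => hx (e ▸ hy), hmem y hy⟩, hch⟩
  · rintro ⟨hne, hmem, hch⟩
    refine ⟨⟨hne, fun y hy => Finset.mem_of_mem_erase (hmem y hy), hch⟩, ?_⟩
    intro hx
    exact (Finset.mem_erase.1 (hmem x hx)).1 rfl

lemma oc_link (S : Finset P) (x : P) (hx : x ∈ S) (A B : Finset P)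
    (hA : ∀ y, y ∈ A ↔ y ∈ S ∧ y < x) (hB : ∀ y, y ∈ B ↔ y ∈ S ∧ x < y) :
    (oc S).link x = SComplex.join2 (oc A) (oc B) := by
  classical
  apply SComplex.ext'
  ext ρ
  constructor
  · rintro ⟨hxρ, hne, hins⟩
    obtain ⟨-, hmem, hch⟩ := hins
    have hcmp : ∀ y ∈ ρ, y < x ∨ x < y := by
      intro y hy
      have h1 := hch y (Finset.mem_insert_of_mem hy) x (Finset.mem_insert_self x ρ)
      have h2 : y ≠ x := fun e => hxρ (e ▸ hy)
      rcases h1 with h | h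
      · exact Or.inl (lt_of_le_of_ne h h2)
      · exact Or.inr (lt_of_le_of_ne h h2.symm)
    have hmem' : ∀ y ∈ ρ, y ∈ S := fun y hy => hmem y (Finset.mem_insert_of_mem hy)
    have hch' : ∀ a ∈ ρ, ∀ b ∈ ρ, a ≤ b ∨ b ≤ a := fun a ha b hb =>
      hch a (Finset.mem_insert_of_mem ha) b (Finset.mem_insert_of_mem hb)
    refine ⟨hne, ρ.filter (fun y => y < x), ρ.filter (fun y => x < y), ?_, ?_, ?_⟩
    · rcases (ρ.filter (fun y => y < x)).eq_empty_or_nonempty with h | h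
      · exact Or.inr h
      · refine Or.inl ⟨h, ?_, ?_⟩
        · intro y hy
          have := Finset.mem_filter.1 hy
          exact (hA y).2 ⟨hmem' y this.1, this.2⟩
        · intro a ha b hb
          exact hch' a (Finset.filter_subset _ _ ha) b (Finset.filter_subset _ _ hb)
    · rcases (ρ.filter (fun y => x < y)).eq_empty_or_nonempty with h | h
      · exact Or.inr h
      · refine Or.inl ⟨h, ?_, ?_⟩
        · intro y hy
          have := Finset.mem_filter.1 hy
          exact (hB y).2 ⟨hmem' y this.1, this.2⟩
        · intro a ha b hb
          exact hch' a (Finset.filter_subset _ _ ha) b (Finset.filter_subset _ _ hb)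
    · ext y
      simp only [Finset.mem_union, Finset.mem_filter]
      constructor
      · intro hy
        rcases hcmp y hy with h | h
        · exact Or.inl ⟨hy, h⟩
        · exact Or.inr ⟨hy, h⟩
      · rintro (⟨h, -⟩ | ⟨h, -⟩) <;> exact h
  · rintro ⟨hne, σ, τ, hσ, hτ, rfl⟩
    have hσA : ∀ y ∈ σ, y ∈ S ∧ y < x := by
      intro y hy
      rcases hσ with hσ | rfl
      · exact (hA y).1 (hσ.2.1 y hy)
      · exact absurd hy (Finset.notMem_empty y)
    have hτB : ∀ y ∈ τ, y ∈ S ∧ x < y := by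
      intro y hy
      rcases hτ with hτ | rfl
      · exact (hB y).1 (hτ.2.1 y hy)
      · exact absurd hy (Finset.notMem_empty y)
    have hmem : ∀ y ∈ σ ∪ τ, y ∈ S ∧ (y < x ∨ x < y) := by
      intro y hy
      rcases Finset.mem_union.1 hy with h | h
      · exact ⟨(hσA y h).1, Or.inl (hσA y h).2⟩
      · exact ⟨(hτB y h).1, Or.inr (hτB y h).2⟩
    refine ⟨?_, hne, ?_⟩
    · intro hxρ
      rcases (hmem x hxρ).2 with h | h <;> exact absurd h (lt_irrefl x)
    · refine ⟨⟨x, Finset.mem_insert_self x _⟩, ?_, ?_⟩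
      · intro y hy
        rcases Finset.mem_insert.1 hy with rfl | hy
        · exact hx
        · exact (hmem y hy).1
      · intro a ha b hb
        rcases Finset.mem_insert.1 ha with ha' | ha'
        · rcases Finset.mem_insert.1 hb with hb' | hb'
          · rw [ha', hb']; exact Or.inl le_rfl
          · rw [ha']
            rcases (hmem b hb').2 with h' | h'
            · exact Or.inr h'.le
            · exact Or.inl h'.le
        · rcases Finset.mem_insert.1 hb with hb' | hb'
          · rw [hb']
            rcases (hmem a ha').2 with h' | h'
            · exact Or.inl h'.le
            · exact Or.inr h'.le
          · rcases Finset.mem_union.1 ha' with ha2 | ha2 <;>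
              rcases Finset.mem_union.1 hb' with hb2 | hb2
            · rcases hσ with hσ | rfl
              · exact hσ.2.2 a ha2 b hb2
              · exact absurd ha2 (Finset.notMem_empty a)
            · exact Or.inl (le_of_lt (lt_trans (hσA a ha2).2 (hτB b hb2).2))
            · exact Or.inr (le_of_lt (lt_trans (hσA b hb2).2 (hτB a ha2).2))
            · rcases hτ with hτ | rfl
              · exact hτ.2.2 a ha2 b hb2
              · exact absurd ha2 (Finset.notMem_empty a)

variable {φ : P → P}

lemma iter_le_succ (hm : Monotone φ) {x : P} (hx : x ≤ φ x) (k : ℕ) :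
    φ^[k] x ≤ φ^[k + 1] x := by
  induction k with
  | zero => simpa using hx
  | succ k ih =>
    have h2 := hm ih
    rwa [← Function.iterate_succ_apply' φ k,
      ← Function.iterate_succ_apply' φ (k + 1)] at h2

lemma succ_le_iter (hm : Monotone φ) {x : P} (hx : φ x ≤ x) (k : ℕ) :
    φ^[k + 1] x ≤ φ^[k] x := by
  induction k with
  | zero => simpa using hx
  | succ k ih =>
    have h2 := hm ih
    rwa [← Function.iterate_succ_apply' φ k,
      ← Function.iterate_succ_apply' φ (k + 1)] at h2

lemma eventually_fixed (h : IsMonotonePosetMap φ) (x : P) :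
    φ (φ^[Fintype.card P] x) = φ^[Fintype.card P] x := by
  set N := Fintype.card P with hN
  have pigeon : ∃ i j : ℕ, i < j ∧ j ≤ N ∧ φ^[i] x = φ^[j] x := by
    obtain ⟨a, b, hab, he⟩ := Fintype.exists_ne_map_eq_of_card_lt
      (fun i : Fin (N + 1) => φ^[(i : ℕ)] x) (by simp [hN])
    rcases lt_or_gt_of_ne hab with hlt | hlt
    · exact ⟨a, b, hlt, Nat.lt_succ_iff.mp b.isLt, he⟩
    · exact ⟨b, a, hlt, Nat.lt_succ_iff.mp a.isLt, he.symm⟩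
  obtain ⟨i, j, hij, hjN, he⟩ := pigeon
  have hfi : φ (φ^[i] x) = φ^[i] x := by
    rw [← Function.iterate_succ_apply' φ i]
    rcases h.2 x with hc | hc
    · have hm : Monotone fun k => φ^[k] x :=
        monotone_nat_of_le_succ (iter_le_succ h.1 hc)
      exact le_antisymm (he ▸ hm (Nat.succ_le_of_lt hij)) (iter_le_succ h.1 hc i)
    · have hm : Antitone fun k => φ^[k] x :=
        antitone_nat_of_succ_le (succ_le_iter h.1 hc)
      exact le_antisymm (succ_le_iter h.1 hc i) (he ▸ hm (Nat.succ_le_of_lt hij))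
  have hiN : i ≤ N := le_of_lt (lt_of_lt_of_le hij hjN)
  have h1 : φ^[N] x = φ^[i] x := by
    conv_lhs => rw [show N = (N - i) + i by omega]
    rw [Function.iterate_add_apply]
    exact Function.iterate_fixed hfi (N - i)
  rw [h1]; exact hfi

lemma main_lemma (φ : P → P) (h : IsMonotonePosetMap φ) :
    ∀ (n : ℕ) (Q : Finset P), Q.card ≤ n → (∀ y ∈ Q, φ y ∈ Q) →
      SComplex.NERed (oc Q) (oc (Q.image φ)) := by
  classical
  intro n
  induction n with
  | zero =>
    intro Q hcard _
    have : Q = ∅ := Finset.card_eq_zero.1 (Nat.le_zero.1 hcard)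
    subst this
    rw [Finset.image_empty]
    exact SComplex.NERed.refl _
  | succ n ih =>
    intro Q hQcard hQcl
    have himQ : Q.image φ ⊆ Q := Finset.image_subset_iff.2 hQcl
    -- iterated reduction for smaller closed sets
    have reduce_iter : ∀ (k : ℕ) (B : Finset P), B.card ≤ n → (∀ y ∈ B, φ y ∈ B) →
        SComplex.NERed (oc B) (oc (B.image (φ^[k]))) := by
      intro k
      induction k with
      | zero =>
        intro B _ _
        simp only [Function.iterate_zero, Finset.image_id]
        exact SComplex.NERed.refl _
      | succ k ihk =>
        intro B hBcard hBcl
        have h1 := ihk B hBcard hBcl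
        have hcl2 : ∀ y ∈ B.image (φ^[k]), φ y ∈ B.image (φ^[k]) := by
          intro y hy
          obtain ⟨b, hb, rfl⟩ := Finset.mem_image.1 hy
          refine Finset.mem_image.2 ⟨φ b, hBcl b hb, ?_⟩
          rw [← Function.iterate_succ_apply φ k b, Function.iterate_succ_apply' φ k b]
        have h2 := ih (B.image (φ^[k])) (Finset.card_image_le.trans hBcard) hcl2
        rw [Finset.image_image] at h2
        rw [show φ ∘ (φ^[k]) = φ^[k+1] from (Function.iterate_succ' φ k).symm] at h2
        exact SComplex.NERed.trans' h1 h2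
    -- the nonevasive-fan lemma for a closed set strictly above / below x
    set N := Fintype.card P with hNdef
    have cone_part : ∀ (B : Finset P) (a : P), B.card ≤ n → (∀ y ∈ B, φ y ∈ B) →
        (φ^[N] a ∈ B) → (∀ y ∈ B, φ^[N] a ≤ φ^[N] y) →
        (oc B).Nonevasive := by
      intro B a hBcard hBcl haB hle
      have hfix : φ (φ^[N] a) = φ^[N] a := eventually_fixed h a
      have hred := reduce_iter N B hBcard hBcl
      refine SComplex.nonevasive_of_nered hred ?_
      have hmemimg : φ^[N] a ∈ B.image (φ^[N]) :=
        Finset.mem_image.2 ⟨φ^[N] a, haB, Function.iterate_fixed hfix N⟩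
      have hlb : ∀ y ∈ B.image (φ^[N]), φ^[N] a ≤ y := by
        intro y hy
        obtain ⟨b, hb, rfl⟩ := Finset.mem_image.1 hy
        exact hle b hb
      refine SComplex.nonevasive_of_isCone _ (φ^[N] a) ⟨?_, ?_⟩
      · exact ⟨Finset.singleton_nonempty _,
          fun y hy => (Finset.mem_singleton.1 hy) ▸ hmemimg,
          fun c hc d hd => Or.inl ((Finset.mem_singleton.1 hc) ▸
            (Finset.mem_singleton.1 hd) ▸ le_rfl)⟩
      · rintro σ ⟨hne, hmem, hch⟩
        refine ⟨⟨_, Finset.mem_insert_self _ _⟩, ?_, ?_⟩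
        · intro y hy
          rcases Finset.mem_insert.1 hy with rfl | hy
          · exact hmemimg
          · exact hmem y hy
        · intro c hc d hd
          rcases Finset.mem_insert.1 hc with rfl | hc
          · rcases Finset.mem_insert.1 hd with rfl | hd
            · exact Or.inl le_rfl
            · exact Or.inl (hlb d (hmem d hd))
          · rcases Finset.mem_insert.1 hd with rfl | hd
            · exact Or.inr (hlb c (hmem c hc))
            · exact hch c hc d hd
    have cone_part' : ∀ (B : Finset P) (a : P), B.card ≤ n → (∀ y ∈ B, φ y ∈ B) →
        (φ^[N] a ∈ B) → (∀ y ∈ B, φ^[N] y ≤ φ^[N] a) →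
        (oc B).Nonevasive := by
      intro B a hBcard hBcl haB hle
      have hfix : φ (φ^[N] a) = φ^[N] a := eventually_fixed h a
      have hred := reduce_iter N B hBcard hBcl
      refine SComplex.nonevasive_of_nered hred ?_
      have hmemimg : φ^[N] a ∈ B.image (φ^[N]) :=
        Finset.mem_image.2 ⟨φ^[N] a, haB, Function.iterate_fixed hfix N⟩
      have hlb : ∀ y ∈ B.image (φ^[N]), y ≤ φ^[N] a := by
        intro y hy
        obtain ⟨b, hb, rfl⟩ := Finset.mem_image.1 hy
        exact hle b hb
      refine SComplex.nonevasive_of_isCone _ (φ^[N] a) ⟨?_, ?_⟩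
      · exact ⟨Finset.singleton_nonempty _,
          fun y hy => (Finset.mem_singleton.1 hy) ▸ hmemimg,
          fun c hc d hd => Or.inl ((Finset.mem_singleton.1 hc) ▸
            (Finset.mem_singleton.1 hd) ▸ le_rfl)⟩
      · rintro σ ⟨hne, hmem, hch⟩
        refine ⟨⟨_, Finset.mem_insert_self _ _⟩, ?_, ?_⟩
        · intro y hy
          rcases Finset.mem_insert.1 hy with rfl | hy
          · exact hmemimg
          · exact hmem y hy
        · intro c hc d hd
          rcases Finset.mem_insert.1 hc with rfl | hc
          · rcases Finset.mem_insert.1 hd with rfl | hd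
            · exact Or.inl le_rfl
            · exact Or.inr (hlb d (hmem d hd))
          · rcases Finset.mem_insert.1 hd with rfl | hd
            · exact Or.inl (hlb c (hmem c hc))
            · exact hch c hc d hd
    -- inner induction: peel off the points of W
    have inner : ∀ (m : ℕ) (W : Finset P), W.card ≤ m → W ⊆ Q \ Q.image φ →
        SComplex.NERed (oc (Q.image φ ∪ W)) (oc (Q.image φ)) := by
      intro m
      induction m with
      | zero =>
        intro W hcard _
        have : W = ∅ := Finset.card_eq_zero.1 (Nat.le_zero.1 hcard)
        subst this
        rw [Finset.union_empty]
        exact SComplex.NERed.refl _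
      | succ m ihm =>
        intro W hWcard hW
        rcases W.eq_empty_or_nonempty with rfl | ⟨x, hxW⟩
        · rw [Finset.union_empty]; exact SComplex.NERed.refl _
        set S := Q.image φ ∪ W with hSdef
        have hSQ : S ⊆ Q :=
          Finset.union_subset himQ (hW.trans (Finset.sdiff_subset))
        have hxQ : x ∈ Q := (Finset.mem_sdiff.1 (hW hxW)).1
        have hxim : x ∉ Q.image φ := (Finset.mem_sdiff.1 (hW hxW)).2
        have hxS : x ∈ S := Finset.mem_union_right _ hxW
        have hφx : φ x ∈ Q.image φ := Finset.mem_image_of_mem φ hxQ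
        have hφxne : φ x ≠ x := fun e => hxim (e ▸ hφx)
        have hiterQ : ∀ k, φ^[k] x ∈ Q := by
          intro k
          induction k with
          | zero => simpa using hxQ
          | succ k ihk =>
            rw [Function.iterate_succ_apply' φ k]
            exact hQcl _ ihk
        have hNpos : 1 ≤ N := Fintype.card_pos_iff.2 ⟨x⟩
        have hxstarQ : φ^[N] x ∈ Q.image φ := by
          have := Finset.mem_image_of_mem φ (hiterQ N)
          rwa [eventually_fixed h x] at this
        set A := S.filter (fun y => y < x) with hAdef
        set B := S.filter (fun y => x < y) with hBdef
        have hAchar : ∀ y, y ∈ A ↔ y ∈ S ∧ y < x := fun y => Finset.mem_filter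
        have hBchar : ∀ y, y ∈ B ↔ y ∈ S ∧ x < y := fun y => Finset.mem_filter
        have hcard_sub : ∀ C : Finset P, (∀ y ∈ C, y ∈ Q ∧ y ≠ x) → C.card ≤ n := by
          intro C hC
          have hsub : C ⊆ Q.erase x := fun y hy =>
            Finset.mem_erase.2 ⟨(hC y hy).2, (hC y hy).1⟩
          have h1 : C.card ≤ (Q.erase x).card := Finset.card_le_card hsub
          have h2 : (Q.erase x).card = Q.card - 1 := Finset.card_erase_of_mem hxQ
          have h3 : 1 ≤ Q.card := Finset.card_pos.2 ⟨x, hxQ⟩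
          omega
        have hlinkNE : ((oc S).link x).Nonevasive := by
          rw [oc_link S x hxS A B hAchar hBchar]
          rcases h.2 x with hxa | hxa
          · -- x < φ x : the upper part B is closed and has the fixed point below it
            have hlt : x < φ x := lt_of_le_of_ne hxa (Ne.symm hφxne)
            have hBcl : ∀ y ∈ B, φ y ∈ B := by
              intro y hy
              obtain ⟨hyS, hxy⟩ := (hBchar y).1 hy
              refine (hBchar (φ y)).2 ⟨Finset.mem_union_left _
                (Finset.mem_image_of_mem φ (hSQ hyS)), ?_⟩
              exact lt_of_lt_of_le hlt (h.1 hxy.le)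
            have hBcard : B.card ≤ n := hcard_sub B (fun y hy => by
              obtain ⟨hyS, hxy⟩ := (hBchar y).1 hy
              exact ⟨hSQ hyS, fun e => absurd (e ▸ hxy) (lt_irrefl x)⟩)
            have hmono : Monotone fun k => φ^[k] x :=
              monotone_nat_of_le_succ (iter_le_succ h.1 hxa)
            have hxstar_gt : x < φ^[N] x := by
              have h1 : φ^[1] x ≤ φ^[N] x := hmono hNpos
              simp only [Function.iterate_one] at h1
              exact lt_of_lt_of_le hlt h1
            have hxstarB : φ^[N] x ∈ B :=
              (hBchar _).2 ⟨Finset.mem_union_left _ hxstarQ, hxstar_gt⟩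
            have hBNE : (oc B).Nonevasive := by
              refine cone_part B x hBcard hBcl hxstarB ?_
              intro y hy
              exact (h.1.iterate N) ((hBchar y).1 hy).2.le
            refine SComplex.nonevasive_join2_right _ _ hBNE ?_
            intro σ hσ τ hτ a haσ haτ
            have h1 : a < x := ((hAchar a).1 (hσ.2.1 a haσ)).2
            have h2 : x < a := ((hBchar a).1 (hτ.2.1 a haτ)).2
            exact absurd (lt_trans h1 h2) (lt_irrefl a)
          · -- φ x < x : the lower part A is closed with the fixed point above it
            have hlt : φ x < x := lt_of_le_of_ne hxa hφxne
            have hAcl : ∀ y ∈ A, φ y ∈ A := by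
              intro y hy
              obtain ⟨hyS, hyx⟩ := (hAchar y).1 hy
              refine (hAchar (φ y)).2 ⟨Finset.mem_union_left _
                (Finset.mem_image_of_mem φ (hSQ hyS)), ?_⟩
              exact lt_of_le_of_lt (h.1 hyx.le) hlt
            have hAcard : A.card ≤ n := hcard_sub A (fun y hy => by
              obtain ⟨hyS, hyx⟩ := (hAchar y).1 hy
              exact ⟨hSQ hyS, fun e => absurd (e ▸ hyx) (lt_irrefl x)⟩)
            have hanti : Antitone fun k => φ^[k] x :=
              antitone_nat_of_succ_le (succ_le_iter h.1 hxa)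
            have hxstar_lt : φ^[N] x < x := by
              have h1 : φ^[N] x ≤ φ^[1] x := hanti hNpos
              simp only [Function.iterate_one] at h1
              exact lt_of_le_of_lt h1 hlt
            have hxstarA : φ^[N] x ∈ A :=
              (hAchar _).2 ⟨Finset.mem_union_left _ hxstarQ, hxstar_lt⟩
            have hANE : (oc A).Nonevasive := by
              refine cone_part' A x hAcard hAcl hxstarA ?_
              intro y hy
              exact (h.1.iterate N) ((hAchar y).1 hy).2.le
            rw [SComplex.join2_comm]
            refine SComplex.nonevasive_join2_right _ _ hANE ?_
            intro σ hσ τ hτ a haσ haτ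
            have h1 : x < a := ((hBchar a).1 (hσ.2.1 a haσ)).2
            have h2 : a < x := ((hAchar a).1 (hτ.2.1 a haτ)).2
            exact absurd (lt_trans h1 h2) (lt_irrefl x)
        refine SComplex.NERed.step _ _ x ?_ hlinkNE ?_
        · exact ⟨Finset.singleton_nonempty x,
            fun y hy => (Finset.mem_singleton.1 hy) ▸ hxS,
            fun c hc d hd => Or.inl ((Finset.mem_singleton.1 hc) ▸
              (Finset.mem_singleton.1 hd) ▸ le_rfl)⟩
        · rw [oc_del]
          have hSe : S.erase x = Q.image φ ∪ W.erase x := by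
            rw [hSdef, Finset.erase_union_distrib,
              Finset.erase_eq_of_notMem hxim]
          rw [hSe]
          refine ihm (W.erase x) ?_ ((Finset.erase_subset x W).trans hW)
          have h1 : (W.erase x).card = W.card - 1 := Finset.card_erase_of_mem hxW
          have h2 : 1 ≤ W.card := Finset.card_pos.2 ⟨x, hxW⟩
          omega
    have := inner (Q \ Q.image φ).card (Q \ Q.image φ) le_rfl (Finset.Subset.refl _)
    rwa [Finset.union_sdiff_of_subset himQ] at this

end PosetPart

/-- For a finite poset `P` and a monotone map `φ : P → P`, the order complex
`Δ(P)` NE-reduces to `Δ(φ(P))`. -/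
theorem nered_orderComplex_image {P : Type*} [Fintype P] [DecidableEq P]
    [PartialOrder P] (φ : P → P) (h : IsMonotonePosetMap φ) :
    SComplex.NERed (orderComplexOn P Set.univ) (orderComplexOn P (Set.range φ)) := by
  have hmain := main_lemma φ h (Finset.univ.card) Finset.univ le_rfl
    (fun y _ => Finset.mem_univ _)
  have e1 : oc (Finset.univ : Finset P) = orderComplexOn P Set.univ := by
    unfold oc; rw [Finset.coe_univ]
  have e2 : oc (Finset.univ.image φ) = orderComplexOn P (Set.range φ) := by
    unfold oc; rw [Finset.coe_image, Finset.coe_univ, Set.image_univ]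
  rwa [e1, e2] at hmain
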